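/- Fix an odd integer β ≥ 3, an integer D ≥ 1, and a real v_max > 0, and let ξ = (β^D − 1)/2 and Δ = 2·v_max/(β^D − 1). If V is a real random variable uniformly distributed on the interval [−v_max − Δ/2, v_max + Δ/2], then the quantization index n(V) is uniformly distributed on the finite set {0, 1, …, β^D − 1}; in particular each numeral x_i(V) is uniformly distributed on the set {−(β−1)/2, …, (β−1)/2}. -/

import Mathlib

/-!
In the coordinate `x = (v + vmax) / Δ + 1 / 2` the interval `[-vmax - Δ / 2, vmax + Δ / 2]`
becomes `[0, β ^ D]` and the quantization index is `⌊max (1 / 2) (min x (β ^ D - 1 / 2))⌋`.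
Clamping only moves points inside the outer cells `[0, 1)` and `[β ^ D - 1, β ^ D)`, so off the
null set `{β ^ D}` the index is `⌊x⌋`, and each of the `β ^ D` unit cells has mass `β ^ (-D)`
under the uniform law. Base-`β` expansion identifies `{0, …, β ^ D - 1}` with digit vectors
`Fin D → Fin β` (`finFunctionFinEquiv`), so a prescribed `i`th digit is shared by `β ^ (D - 1)`
indices, and each numeral value has probability `1 / β`.
-/

/-- Clamping of `v` to the interval `[-vmax, vmax]`. -/
noncomputable def clampR (vmax v : ℝ) : ℝ := max (-vmax) (min v vmax)

/-- The quantization index `n(v) = ⌊(ξ/v_max)·v' + ξ + 1/2⌋` where `ξ = (β^D − 1)/2` and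
`v'` is the clamped value of `v`. -/
noncomputable def qidx (β D : ℕ) (vmax v : ℝ) : ℤ :=
  ⌊(((β : ℝ) ^ D - 1) / 2 / vmax) * clampR vmax v + ((β : ℝ) ^ D - 1) / 2 + 1 / 2⌋

/-- The `i`th base-`β` digit `b_i(v) ∈ {0,…,β−1}` of the quantization index `n(v)`. -/
noncomputable def bdigit (β D : ℕ) (vmax v : ℝ) (i : ℕ) : ℕ :=
  (qidx β D vmax v).toNat / β ^ i % β

/-- The `i`th balanced numeral `x_i(v) = b_i(v) − (β−1)/2`. -/
noncomputable def numeral (β D : ℕ) (vmax v : ℝ) (i : ℕ) : ℤ :=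
  (bdigit β D vmax v i : ℤ) - ((β : ℤ) - 1) / 2

/-- The quantizer (decoder composed with encoder)
`q(v) = (v_max/ξ)·Σ_{i=0}^{D−1} x_i(v)·β^i` where `ξ = (β^D − 1)/2`. -/
noncomputable def quant (β D : ℕ) (vmax v : ℝ) : ℝ :=
  vmax / (((β : ℝ) ^ D - 1) / 2) *
    ∑ i ∈ Finset.range D, (numeral β D vmax v i : ℝ) * (β : ℝ) ^ i

open Set MeasureTheory ProbabilityTheory
open scoped ENNReal

open Finset in
theorem card_filter_digit_eq {β D i d : ℕ} (hi : i < D) (hd : d < β) :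
    #{n ∈ Finset.range (β ^ D) | n / β ^ i % β = d} = β ^ (D - 1) := by
  have hfun : #{f : Fin D → Fin β | f ⟨i, hi⟩ = ⟨d, hd⟩} = β ^ (D - 1) := by
    simpa using Fintype.card_filter_piFinset_const_eq_of_mem (univ : Finset (Fin β))
      (⟨i, hi⟩ : Fin D) (mem_univ (⟨d, hd⟩ : Fin β))
  rw [← hfun]
  refine card_bij' (fun n hn => finFunctionFinEquiv.symm ⟨n, mem_range.1 (mem_filter.1 hn).1⟩)
    (fun f _ => finFunctionFinEquiv f) ?_ ?_ ?_ ?_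
  · intro n hn
    simpa [Fin.ext_iff, finFunctionFinEquiv_symm_apply_val] using (mem_filter.1 hn).2
  · intro f hf
    simp only [mem_filter, Finset.mem_univ, true_and, Fin.ext_iff] at hf
    refine mem_filter.2 ⟨mem_range.2 (finFunctionFinEquiv f).isLt, ?_⟩
    rw [← hf, ← Equiv.symm_apply_apply finFunctionFinEquiv f, finFunctionFinEquiv_symm_apply_val]
    simp
  · intro n hn; simp
  · intro f hf; simp only [Fin.eta, Equiv.symm_apply_apply]

theorem measure_preimage_finset_eq_card_mul {α ι : Type*} [MeasurableSpace α] {μ : Measure α}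
    {f : α → ι} {s : Finset ι} {c : ℝ≥0∞} (hf : ∀ i ∈ s, MeasurableSet (f ⁻¹' {i}))
    (hc : ∀ i ∈ s, μ (f ⁻¹' {i}) = c) : μ (f ⁻¹' s) = s.card * c := by
  rw [← sum_measure_preimage_singleton s hf, Finset.sum_congr rfl hc, Finset.sum_const,
    nsmul_eq_mul]

theorem floor_max_min_eq_floor {N : ℕ} (hN : 1 ≤ N) {x : ℝ} (hx : x ∈ Ico 0 (N : ℝ)) :
    ⌊max (1 / 2) (min x (N - 1 / 2))⌋ = ⌊x⌋ := by
  have hN' : (1 : ℝ) ≤ N := by exact_mod_cast hN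
  rcases lt_or_ge x (1 / 2) with hlo | hlo
  · rw [max_eq_left ((min_le_left _ _).trans hlo.le),
      Int.floor_eq_zero_iff.2 ⟨by norm_num, by norm_num⟩,
      Int.floor_eq_zero_iff.2 ⟨hx.1, by linarith⟩]
  rcases le_or_gt x (N - 1 / 2) with hhi | hhi
  · rw [min_eq_left hhi, max_eq_right hlo]
  · have hfloor : ∀ y : ℝ, N - 1 / 2 ≤ y → y < N → ⌊y⌋ = (N : ℤ) - 1 := fun y h1 h2 =>
      Int.floor_eq_iff.2 ⟨by push_cast; linarith, by push_cast; linarith⟩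
    rw [min_eq_right hhi.le, max_eq_right (by linarith), hfloor _ le_rfl (by linarith),
      hfloor x hhi.le hx.2]

theorem floor_sub_div_eq_iff {a Δ v : ℝ} (hΔ : 0 < Δ) (m : ℤ) :
    ⌊(v - a) / Δ⌋ = m ↔ v ∈ Ico (a + m * Δ) (a + (m + 1) * Δ) := by
  rw [Int.floor_eq_iff, le_div_iff₀ hΔ, div_lt_iff₀ hΔ, mem_Ico]
  constructor <;> rintro ⟨h1, h2⟩ <;> constructor <;> linarith

theorem cond_Icc_preimage_singleton {a Δ : ℝ} (hΔ : 0 < Δ) {N : ℕ} {f : ℝ → ℤ}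
    (hf : ∀ v ∈ Ico a (a + N * Δ), f v = ⌊(v - a) / Δ⌋) {m : ℤ} (hm0 : 0 ≤ m) (hmN : m < N) :
    volume[|Icc a (a + N * Δ)] (f ⁻¹' {m}) = (N : ℝ≥0∞)⁻¹ := by
  have hm0' : (0 : ℝ) ≤ m := by exact_mod_cast hm0
  have hmN' : (m : ℝ) + 1 ≤ N := by exact_mod_cast hmN
  have hcell : Ico a (a + N * Δ) ∩ f ⁻¹' {m} = Ico (a + m * Δ) (a + (m + 1) * Δ) := by
    ext v
    simp only [mem_inter_iff]
    constructor
    · rintro ⟨hv, hfv⟩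
      rwa [mem_preimage, mem_singleton_iff, hf v hv, floor_sub_div_eq_iff hΔ] at hfv
    · intro hv
      have hvI : v ∈ Ico a (a + N * Δ) := Ico_subset_Ico (by nlinarith) (by nlinarith) hv
      exact ⟨hvI, by rwa [mem_preimage, mem_singleton_iff, hf v hvI, floor_sub_div_eq_iff hΔ]⟩
  have hae : (Icc a (a + N * Δ) ∩ f ⁻¹' {m} : Set ℝ) =ᵐ[volume]
      Ico (a + m * Δ) (a + (m + 1) * Δ) :=
    hcell ▸ ae_eq_set_inter Ico_ae_eq_Icc.symm (ae_eq_refl _)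
  rw [cond_apply measurableSet_Icc, measure_congr hae, Real.volume_Icc, Real.volume_Ico,
    add_sub_cancel_left, show a + (m + 1) * Δ - (a + m * Δ) = Δ by ring,
    ENNReal.ofReal_mul (Nat.cast_nonneg N), ENNReal.ofReal_natCast,
    ENNReal.mul_inv (by simp) (by simp), mul_assoc,
    ENNReal.inv_mul_cancel (by simpa using hΔ) ENNReal.ofReal_ne_top, mul_one]

noncomputable def quantStep (β D : ℕ) (vmax : ℝ) : ℝ := 2 * vmax / ((β : ℝ) ^ D - 1)

section Quantizer

variable {β D : ℕ} {vmax : ℝ}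

local notation "Δ" => quantStep β D vmax

theorem quantStep_pos (hN : 1 < (β : ℝ) ^ D) (hv : 0 < vmax) : 0 < Δ :=
  div_pos (by positivity) (by linarith)

theorem qidx_eq_floor_max_min (hN : 1 < (β : ℝ) ^ D) (hv : 0 < vmax) (v : ℝ) :
    qidx β D vmax v =
      ⌊max (1 / 2) (min ((v - (-vmax - Δ / 2)) / Δ) ((β : ℝ) ^ D - 1 / 2))⌋ := by
  have hΔ := quantStep_pos hN hv
  have hmono : Monotone fun t : ℝ => (t - (-vmax - Δ / 2)) / Δ :=
    fun _ _ h => div_le_div_of_nonneg_right (sub_le_sub_right h _) hΔ.le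
  have hΔv : Δ * ((β : ℝ) ^ D - 1) = 2 * vmax := div_mul_cancel₀ _ (by linarith)
  have harg : ∀ t : ℝ, ((β : ℝ) ^ D - 1) / 2 / vmax * t + ((β : ℝ) ^ D - 1) / 2 + 1 / 2 =
      (t - (-vmax - Δ / 2)) / Δ := by
    intro t
    have hN1 : (β : ℝ) ^ D - 1 ≠ 0 := by linarith
    unfold quantStep
    field_simp
    ring
  have hlow : (-vmax - (-vmax - Δ / 2)) / Δ = 1 / 2 := by field_simp; ring
  have hhigh : (vmax - (-vmax - Δ / 2)) / Δ = (β : ℝ) ^ D - 1 / 2 := by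
    field_simp; linarith
  -- clamping commutes with the increasing affine change of coordinates
  have hmax := hmono.map_max (a := -vmax) (b := min v vmax)
  have hmin := hmono.map_min (a := v) (b := vmax)
  rw [qidx, clampR, harg, hmax, hmin, hlow, hhigh]

theorem qidx_eq_floor_of_mem_Ico (hN : 1 < (β : ℝ) ^ D) (hv : 0 < vmax) {v : ℝ}
    (hvI : v ∈ Ico (-vmax - Δ / 2) (-vmax - Δ / 2 + (β ^ D : ℕ) * Δ)) :
    qidx β D vmax v = ⌊(v - (-vmax - Δ / 2)) / Δ⌋ := by
  have hΔ := quantStep_pos hN hv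
  have hx : (v - (-vmax - Δ / 2)) / Δ ∈ Ico 0 ((β ^ D : ℕ) : ℝ) := by
    rw [mem_Ico, le_div_iff₀ hΔ, div_lt_iff₀ hΔ]
    constructor <;> linarith [hvI.1, hvI.2]
  have h1 : 1 ≤ β ^ D := by exact_mod_cast hN.le
  rw [qidx_eq_floor_max_min hN hv, ← floor_max_min_eq_floor h1 hx, Nat.cast_pow]

theorem qidx_nonneg (hN : 1 < (β : ℝ) ^ D) (hv : 0 < vmax) (v : ℝ) : 0 ≤ qidx β D vmax v := by
  rw [qidx_eq_floor_max_min hN hv, Int.floor_nonneg]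
  exact le_max_of_le_left (by norm_num)

theorem qidx_lt (hN : 1 < (β : ℝ) ^ D) (hv : 0 < vmax) (v : ℝ) :
    qidx β D vmax v < (β : ℤ) ^ D := by
  rw [qidx_eq_floor_max_min hN hv, Int.floor_lt]
  push_cast
  exact max_lt (by linarith) ((min_le_right _ _).trans_lt (by linarith))

theorem measurable_qidx (β D : ℕ) (vmax : ℝ) : Measurable (qidx β D vmax) := by
  unfold qidx clampR
  fun_prop

theorem cond_qidx_preimage_singleton (hN : 1 < (β : ℝ) ^ D) (hv : 0 < vmax) {m : ℤ}
    (hm0 : 0 ≤ m) (hm : m ≤ (β : ℤ) ^ D - 1) :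
    volume[|Icc (-vmax - Δ / 2) (vmax + Δ / 2)] (qidx β D vmax ⁻¹' {m}) =
      ((β : ℝ≥0∞) ^ D)⁻¹ := by
  have hΔv : Δ * ((β : ℝ) ^ D - 1) = 2 * vmax := div_mul_cancel₀ _ (by linarith)
  have hend : vmax + Δ / 2 = -vmax - Δ / 2 + (β ^ D : ℕ) * Δ := by push_cast; linarith
  rw [hend, cond_Icc_preimage_singleton (quantStep_pos hN hv)
    (fun _ hvI => qidx_eq_floor_of_mem_Ico hN hv hvI) hm0 (by push_cast; omega), Nat.cast_pow]

theorem measurable_numeral (β D : ℕ) (vmax : ℝ) (i : ℕ) :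
    Measurable fun v => numeral β D vmax v i :=
  (Measurable.of_discrete
    (f := fun q : ℤ => ((q.toNat / β ^ i % β : ℕ) : ℤ) - ((β : ℤ) - 1) / 2)).comp
      (measurable_qidx β D vmax)

theorem numeral_eq_iff_mem_filter_digit (hN : 1 < (β : ℝ) ^ D) (hv : 0 < vmax) {i d : ℕ}
    {s : ℤ} (hd : (d : ℤ) = s + ((β : ℤ) - 1) / 2) (v : ℝ) :
    numeral β D vmax v i = s ↔
      (qidx β D vmax v).toNat ∈ {n ∈ Finset.range (β ^ D) | n / β ^ i % β = d} := by
  have h0 := qidx_nonneg hN hv v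
  have hlt := qidx_lt hN hv v
  rw [Finset.mem_filter, Finset.mem_range, numeral, bdigit]
  zify [h0]
  omega

theorem toNat_qidx_preimage_singleton (hN : 1 < (β : ℝ) ^ D) (hv : 0 < vmax) (n : ℕ) :
    (fun v => (qidx β D vmax v).toNat) ⁻¹' {n} = qidx β D vmax ⁻¹' {(n : ℤ)} := by
  ext v
  have := qidx_nonneg hN hv v
  simp only [mem_preimage, mem_singleton_iff]
  omega

theorem cond_numeral_eq (hN : 1 < (β : ℝ) ^ D) (hv : 0 < vmax) {i : ℕ} (hi : i < D) {s : ℤ}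
    (hs : |s| ≤ ((β : ℤ) - 1) / 2) :
    volume[|Icc (-vmax - Δ / 2) (vmax + Δ / 2)] {v | numeral β D vmax v i = s} =
      (β : ℝ≥0∞)⁻¹ := by
  obtain ⟨hs1, hs2⟩ := abs_le.1 hs
  lift s + ((β : ℤ) - 1) / 2 to ℕ using (by omega) with d hd
  have hdβ : d < β := by omega
  have hevent : {v | numeral β D vmax v i = s} = (fun v => (qidx β D vmax v).toNat) ⁻¹'
      ↑{n ∈ Finset.range (β ^ D) | n / β ^ i % β = d} := by
    ext v
    exact numeral_eq_iff_mem_filter_digit hN hv hd v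
  have hcell (n : ℕ) (hn : n ∈ {n ∈ Finset.range (β ^ D) | n / β ^ i % β = d}) :
      volume[|Icc (-vmax - Δ / 2) (vmax + Δ / 2)] ((fun v => (qidx β D vmax v).toNat) ⁻¹' {n}) =
        ((β : ℝ≥0∞) ^ D)⁻¹ := by
    have hnN : (n : ℤ) < (β : ℤ) ^ D := by
      exact_mod_cast Finset.mem_range.1 (Finset.mem_filter.1 hn).1
    rw [toNat_qidx_preimage_singleton hN hv]
    exact cond_qidx_preimage_singleton hN hv (Int.natCast_nonneg n) (by omega)
  have hβ0 : (β : ℝ≥0∞) ≠ 0 := by simpa using (by omega : β ≠ 0)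
  have hpow : (β : ℝ≥0∞) ^ D = (β : ℝ≥0∞) ^ (D - 1) * β := (pow_sub_one_mul (by omega) _).symm
  have hmeas (n : ℕ) : MeasurableSet ((fun v => (qidx β D vmax v).toNat) ⁻¹' {n}) :=
    toNat_qidx_preimage_singleton hN hv n ▸ measurable_qidx β D vmax (measurableSet_singleton _)
  rw [hevent, measure_preimage_finset_eq_card_mul (fun n _ => hmeas n) hcell,
    card_filter_digit_eq hi hdβ,
    Nat.cast_pow, hpow, ENNReal.mul_inv (by simp [hβ0]) (by simp), ← mul_assoc,
    ENNReal.mul_inv_cancel (by simp [hβ0]) (by simp), one_mul]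

end Quantizer

open MeasureTheory in
theorem qidx_uniform_of_uniform_general {Ω : Type*} [MeasurableSpace Ω]
    (P : Measure Ω)
    (β D : ℕ) (hβ : 3 ≤ β) (hD : 1 ≤ D)
    (vmax : ℝ) (hv : 0 < vmax)
    (V : Ω → ℝ) (hVmeas : Measurable V)
    (hlaw : Measure.map V P =
      (volume (Set.Icc (-vmax - 2 * vmax / ((β : ℝ) ^ D - 1) / 2)
          (vmax + 2 * vmax / ((β : ℝ) ^ D - 1) / 2)))⁻¹ •
        volume.restrict (Set.Icc (-vmax - 2 * vmax / ((β : ℝ) ^ D - 1) / 2)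
          (vmax + 2 * vmax / ((β : ℝ) ^ D - 1) / 2))) :
    (∀ m : ℤ, 0 ≤ m → m ≤ (β : ℤ) ^ D - 1 →
        P {ω | qidx β D vmax (V ω) = m} = ((β : ENNReal) ^ D)⁻¹) ∧
      ∀ i < D, ∀ s : ℤ, |s| ≤ ((β : ℤ) - 1) / 2 →
        P {ω | numeral β D vmax (V ω) i = s} = (β : ENNReal)⁻¹ := by
  have hN : 1 < (β : ℝ) ^ D := one_lt_pow₀ (by exact_mod_cast (by omega : 1 < β)) (by omega)
  have hP : ∀ A, MeasurableSet A → P (V ⁻¹' A) =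
      volume[|Icc (-vmax - quantStep β D vmax / 2) (vmax + quantStep β D vmax / 2)] A :=
    fun A hA => by rw [← Measure.map_apply hVmeas hA]; exact congrArg (· A) hlaw
  exact ⟨fun m hm0 hm => (hP _ (measurable_qidx β D vmax (measurableSet_singleton m))).trans
      (cond_qidx_preimage_singleton hN hv hm0 hm),
    fun i hi s hs => (hP _ (measurable_numeral β D vmax i (measurableSet_singleton s))).trans
      (cond_numeral_eq hN hv hi hs)⟩

open MeasureTheory in
/-- For an odd integer `β ≥ 3`, `D ≥ 1`, `v_max > 0` and `Δ = 2·v_max/(β^D − 1)`: if `V`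
is uniformly distributed on `[−v_max − Δ/2, v_max + Δ/2]`, then the quantization index
`n(V)` is uniformly distributed on `{0,…,β^D − 1}`, and each numeral `x_i(V)` is uniformly
distributed on `{−(β−1)/2,…,(β−1)/2}`. -/
theorem qidx_uniform_of_uniform {Ω : Type*} [MeasurableSpace Ω]
    (P : Measure Ω) [IsProbabilityMeasure P]
    (β D : ℕ) (hβ : 3 ≤ β) (hodd : Odd β) (hD : 1 ≤ D)
    (vmax : ℝ) (hv : 0 < vmax)
    (V : Ω → ℝ) (hVmeas : Measurable V)
    (hlaw : Measure.map V P =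
      (volume (Set.Icc (-vmax - 2 * vmax / ((β : ℝ) ^ D - 1) / 2)
          (vmax + 2 * vmax / ((β : ℝ) ^ D - 1) / 2)))⁻¹ •
        volume.restrict (Set.Icc (-vmax - 2 * vmax / ((β : ℝ) ^ D - 1) / 2)
          (vmax + 2 * vmax / ((β : ℝ) ^ D - 1) / 2))) :
    (∀ m : ℤ, 0 ≤ m → m ≤ (β : ℤ) ^ D - 1 →
        P {ω | qidx β D vmax (V ω) = m} = ((β : ENNReal) ^ D)⁻¹) ∧
      ∀ i < D, ∀ s : ℤ, |s| ≤ ((β : ℤ) - 1) / 2 →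
        P {ω | numeral β D vmax (V ω) i = s} = (β : ENNReal)⁻¹ :=
  qidx_uniform_of_uniform_general P β D hβ hD vmax hv V hVmeas hlaw
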